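/- arXiv:1708.08420 — 3 statements merged into one kernel-verified Lean document; each statement's English description precedes it below -/
import Mathlib

section
/- Let d ≥ 1 and let w_1 ≥ w_2 ≥ 1 be integers, and let t_1, t_2 ≥ 0 be rationals. Let f ∈ ℂ[x_0,x_1,x_2] be a nonzero homogeneous polynomial of degree d, and let l_1 = m_1 + x_2 and l_2 = m_2 + x_2, where m_1, m_2 are linear forms in x_0, x_1 only (so the point [0:0:1] does not lie on the two lines). Set w(f) = min{w_1·i_0 + w_2·i_1 : the monomial x_0^{i_0}x_1^{i_1}x_2^{i_2} occurs in f}. If the triple (f, l_1, l_2) is (t_1,t_2)-semistable, then t_1 + t_2 − 3·w(f)/(w_1+w_2) + d ≥ 0. -/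
open MvPolynomial

/-- The Hilbert–Mumford function `μ(f, r)`: the minimum over all monomials
`x_0^{d_0} ⋯ x_{m-1}^{d_{m-1}}` occurring in `f` of `∑ i, d_i * r_i`.
(Junk value `0` if the support is empty.) -/
noncomputable def mu {m : ℕ} (f : MvPolynomial (Fin m) ℂ) (r : Fin m → ℤ) : ℤ :=
  if h : f.support.Nonempty then
    f.support.inf' h (fun D => ∑ i, (D i : ℤ) * r i)
  else 0

/-- A weight vector `r` is normalized if `r ≠ 0`, `r_0 ≥ r_1 ≥ ⋯ ≥ r_{m-1}` and `∑ r_i = 0`. -/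
def Normalized {m : ℕ} (r : Fin m → ℤ) : Prop :=
  r ≠ 0 ∧ (∀ i j : Fin m, i ≤ j → r j ≤ r i) ∧ ∑ i, r i = 0

/-- The action of a matrix on polynomials by linear substitution of the variables. -/
noncomputable def act {m : ℕ} (g : Matrix (Fin m) (Fin m) ℂ)
    (f : MvPolynomial (Fin m) ℂ) : MvPolynomial (Fin m) ℂ :=
  aeval (fun i => ∑ j, C (g i j) * X j) f

/-- `(f, l)` is `t`-semistable if `μ(g·f, r) + ∑ i, t i · μ(g·l_i, r) ≤ 0` for every
`g ∈ SL(m, ℂ)` and every normalized weight vector `r`. -/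
def SemiStable {m : ℕ} {ι : Type} [Fintype ι] (t : ι → ℚ)
    (f : MvPolynomial (Fin m) ℂ) (l : ι → MvPolynomial (Fin m) ℂ) : Prop :=
  ∀ g : Matrix.SpecialLinearGroup (Fin m) ℂ, ∀ r : Fin m → ℤ, Normalized r →
    (mu (act (g : Matrix (Fin m) (Fin m) ℂ) f) r : ℚ)
      + ∑ i, t i * (mu (act (g : Matrix (Fin m) (Fin m) ℂ) (l i)) r : ℚ) ≤ 0

/-- `(f, l)` is `t`-stable if the strict inequality holds for all `g` and normalized `r`. -/
def Stable {m : ℕ} {ι : Type} [Fintype ι] (t : ι → ℚ)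
    (f : MvPolynomial (Fin m) ℂ) (l : ι → MvPolynomial (Fin m) ℂ) : Prop :=
  ∀ g : Matrix.SpecialLinearGroup (Fin m) ℂ, ∀ r : Fin m → ℤ, Normalized r →
    (mu (act (g : Matrix (Fin m) (Fin m) ℂ) f) r : ℚ)
      + ∑ i, t i * (mu (act (g : Matrix (Fin m) (Fin m) ℂ) (l i)) r : ℚ) < 0

lemma mu_le {m : ℕ} (f : MvPolynomial (Fin m) ℂ) (r : Fin m → ℤ) {D} (hD : D ∈ f.support) :
    mu f r ≤ ∑ i, (D i : ℤ) * r i := by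
  rw [mu, dif_pos ⟨D, hD⟩]
  exact Finset.inf'_le _ hD

lemma le_mu {m : ℕ} {f : MvPolynomial (Fin m) ℂ} (r : Fin m → ℤ) (c : ℤ) (hc : c ≤ 0)
    (h : ∀ D ∈ f.support, c ≤ ∑ i, (D i : ℤ) * r i) : c ≤ mu f r := by
  rw [mu]
  split
  · exact Finset.le_inf' _ _ h
  · exact hc

lemma act_one {m : ℕ} (f : MvPolynomial (Fin m) ℂ) :
    MvPolynomial.aeval (fun i => ∑ j, C ((1 : Matrix (Fin m) (Fin m) ℂ) i j) * X j) f = f := by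
  have : (fun i : Fin m => ∑ j, C ((1 : Matrix (Fin m) (Fin m) ℂ) i j) * X j)
      = fun i : Fin m => (X i : MvPolynomial (Fin m) ℂ) := by
    funext i
    simp [Matrix.one_apply]
  rw [this, aeval_X_left_apply]

lemma supp_line (a b : ℂ) :
    (C a * X 0 + C b * X 1 + X 2 : MvPolynomial (Fin 3) ℂ).support ⊆
      {Finsupp.single 0 1, Finsupp.single 1 1, Finsupp.single 2 1} := by
  refine Finset.Subset.trans (support_add) ?_
  intro D hD
  simp only [Finset.mem_insert, Finset.mem_singleton]
  rcases Finset.mem_union.mp hD with h | h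
  · rcases Finset.mem_union.mp (support_add h) with h | h
    · rw [C_mul_X_eq_monomial] at h
      have := support_monomial_subset h
      simp only [Finset.mem_singleton] at this
      tauto
    · rw [C_mul_X_eq_monomial] at h
      have := support_monomial_subset h
      simp only [Finset.mem_singleton] at this
      tauto
  · rw [support_X] at h
    simp only [Finset.mem_singleton] at h
    tauto

lemma sum_single_mul (k : Fin 3) (r : Fin 3 → ℤ) :
    ∑ i, ((Finsupp.single k 1 : Fin 3 →₀ ℕ) i : ℤ) * r i = r k := by
  fin_cases k <;> simp [Fin.sum_univ_three, Finsupp.single_apply]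

lemma mu_line_ge (a b : ℂ) (r : Fin 3 → ℤ) (h0 : r 2 ≤ r 0) (h1 : r 2 ≤ r 1) (h2 : r 2 ≤ 0) :
    r 2 ≤ mu (C a * X 0 + C b * X 1 + X 2) r := by
  refine le_mu r _ h2 ?_
  intro D hD
  have h := supp_line a b hD
  simp only [Finset.mem_insert, Finset.mem_singleton] at h
  rcases h with h | h | h <;> subst h <;> rw [sum_single_mul]
  · exact h0
  · exact h1

/-- Case (1) of Lemma 2.9 of the paper: if the triple `(f, l_1, l_2)`, with
`l_1 = a·x_0 + b·x_1 + x_2` and `l_2 = c·x_0 + e·x_1 + x_2` two lines not passing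
through `[0:0:1]`, is `(t_1, t_2)`-semistable, then
`t_1 + t_2 − 3·w(f)/(w_1+w_2) + d ≥ 0`, where
`w(f) = min{w_1 i_0 + w_2 i_1 : x_0^{i_0} x_1^{i_1} x_2^{i_2} ∈ Supp f} = μ(f, (w_1,w_2,0))`. -/
theorem semistable_singularity_not_on_lines (d : ℕ) (hd : 1 ≤ d)
    (w₁ w₂ : ℤ) (hw : w₂ ≤ w₁) (hw₂ : 1 ≤ w₂)
    (t₁ t₂ : ℚ) (ht₁ : 0 ≤ t₁) (ht₂ : 0 ≤ t₂)
    (f : MvPolynomial (Fin 3) ℂ) (hf : f ≠ 0) (hfh : f.IsHomogeneous d)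
    (a b c e : ℂ)
    (hss : SemiStable ![t₁, t₂] f
      ![C a * X 0 + C b * X 1 + X 2, C c * X 0 + C e * X 1 + X 2]) :
    0 ≤ t₁ + t₂ - 3 * (mu f ![w₁, w₂, 0] : ℚ) / ((w₁ : ℚ) + (w₂ : ℚ)) + (d : ℚ) := by
  --

  have hW : (0:ℤ) < w₁ + w₂ := by omega
  set r : Fin 3 → ℤ := ![2*w₁ - w₂, 2*w₂ - w₁, -w₁ - w₂] with hrdef
  have hr0 : r 0 = 2*w₁ - w₂ := rfl
  have hr1 : r 1 = 2*w₂ - w₁ := rfl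
  have hr2 : r 2 = -w₁ - w₂ := rfl
  have hnorm : Normalized r := by
    refine ⟨?_, ?_, ?_⟩
    · intro h
      have h2 : (-w₁ - w₂ : ℤ) = 0 := by rw [← hr2, h]; rfl
      omega
    · intro i j hij
      clear hss
      rw [hrdef]
      fin_cases i <;> fin_cases j <;> simp_all <;> omega
    · rw [Fin.sum_univ_three, hr0, hr1, hr2]; ring
  have hss1 := hss 1 r hnorm
  simp only [act, Matrix.SpecialLinearGroup.coe_one, act_one, Fin.sum_univ_two,
    Matrix.cons_val_zero, Matrix.cons_val_one, Matrix.head_cons] at hss1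
  -- bounds on the lines
  have hb1 := mu_line_ge a b r (by rw [hr0, hr2]; omega) (by rw [hr1, hr2]; omega)
    (by rw [hr2]; omega)
  have hb2 := mu_line_ge c e r (by rw [hr0, hr2]; omega) (by rw [hr1, hr2]; omega)
    (by rw [hr2]; omega)
  rw [hr2] at hb1 hb2
  -- support and degree
  have hsupp : f.support.Nonempty := by
    exact Finset.nonempty_iff_ne_empty.mpr fun h => hf (support_eq_empty.mp h)
  have hdeg : ∀ D ∈ f.support, (∑ i, (D i : ℤ)) = d := by
    intro D hD
    have h := hfh (mem_support_iff.mp hD)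
    rw [Finsupp.weight_apply] at h
    simp only [Pi.one_apply, smul_eq_mul, mul_one] at h
    rw [Finsupp.sum] at h
    have h2 : ∑ i ∈ D.support, D i = ∑ i, D i :=
      Finset.sum_subset (Finset.subset_univ _) (by
        intro x _ hx
        simpa using hx)
    rw [h2] at h
    exact_mod_cast h
  have hval : ∀ D ∈ f.support, ∑ i, (D i : ℤ) * r i
      = 3 * (∑ i, (D i : ℤ) * (![w₁, w₂, 0]) i) - d * (w₁ + w₂) := by
    intro D hD
    have hs := hdeg D hD
    rw [Fin.sum_univ_three] at hs
    rw [Fin.sum_univ_three, Fin.sum_univ_three, hr0, hr1, hr2]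
    simp only [Matrix.cons_val_zero, Matrix.cons_val_one, Matrix.head_cons]
    have : (![w₁, w₂, 0] : Fin 3 → ℤ) 2 = 0 := rfl
    rw [this]
    linear_combination (-(w₁ + w₂)) * hs
  have hkey : mu f r = 3 * mu f ![w₁, w₂, 0] - d * (w₁ + w₂) := by
    obtain ⟨D₀, hD₀, hE₀⟩ := Finset.exists_mem_eq_inf' hsupp
      (fun D => ∑ i, (D i : ℤ) * (![w₁, w₂, 0]) i)
    obtain ⟨D₁, hD₁, hE₁⟩ := Finset.exists_mem_eq_inf' hsupp
      (fun D => ∑ i, (D i : ℤ) * r i)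
    have hmw : mu f ![w₁, w₂, 0] = ∑ i, (D₀ i : ℤ) * (![w₁, w₂, 0]) i := by
      rw [mu, dif_pos hsupp]; exact hE₀
    have hmr : mu f r = ∑ i, (D₁ i : ℤ) * r i := by
      rw [mu, dif_pos hsupp]; exact hE₁
    apply le_antisymm
    · calc mu f r ≤ ∑ i, (D₀ i : ℤ) * r i := mu_le f r hD₀
        _ = 3 * (∑ i, (D₀ i : ℤ) * (![w₁, w₂, 0]) i) - d * (w₁ + w₂) := hval D₀ hD₀
        _ = 3 * mu f ![w₁, w₂, 0] - d * (w₁ + w₂) := by rw [hmw]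
    · have hle := mu_le f ![w₁, w₂, 0] hD₁
      rw [hmr, hval D₁ hD₁]
      linarith
  -- pass to ℚ
  have hWQ : (0:ℚ) < (w₁:ℚ) + w₂ := by exact_mod_cast hW
  have hQ : (mu f r : ℚ) = 3 * (mu f ![w₁, w₂, 0] : ℚ) - d * ((w₁:ℚ) + w₂) := by
    rw [hkey]; push_cast; ring
  have hb1Q : (-(w₁:ℚ) - w₂) ≤ (mu (C a * X 0 + C b * X 1 + X 2) r : ℚ) := by
    exact_mod_cast hb1
  have hb2Q : (-(w₁:ℚ) - w₂) ≤ (mu (C c * X 0 + C e * X 1 + X 2) r : ℚ) := by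
    exact_mod_cast hb2
  have p1 := mul_le_mul_of_nonneg_left hb1Q ht₁
  have p2 := mul_le_mul_of_nonneg_left hb2Q ht₂
  rw [hQ] at hss1
  have h3 : 3 * (mu f ![w₁, w₂, 0] : ℚ) ≤ (t₁ + t₂ + d) * ((w₁:ℚ) + w₂) := by nlinarith
  have h4 := (div_le_iff₀ hWQ).mpr h3
  linarith [h4]
end

section
/- The 10×10 block diagonal Gram matrices of U ⊥ A_1⁴ ⊥ D_4 and of U(2) ⊥ A_1² ⊥ D_6 are isometric: there exists a 10×10 integer matrix P with det P = ±1 such that Pᵀ A P = B, where A is the Gram matrix of U ⊥ A_1 ⊥ A_1 ⊥ A_1 ⊥ A_1 ⊥ D_4 and B is the Gram matrix of U(2) ⊥ A_1 ⊥ A_1 ⊥ D_6. -/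
open Matrix

/-- The block diagonal Gram matrix of `U ⊥ A₁ ⊥ A₁ ⊥ A₁ ⊥ A₁ ⊥ D₄` (root lattices
negative definite; `D₄` is the negative of the Cartan matrix of type `D₄`). -/
def gramUA1A1A1A1D4 : Matrix (Fin 10) (Fin 10) ℤ :=
  !![0, 1, 0, 0, 0, 0, 0, 0, 0, 0;
     1, 0, 0, 0, 0, 0, 0, 0, 0, 0;
     0, 0, -2, 0, 0, 0, 0, 0, 0, 0;
     0, 0, 0, -2, 0, 0, 0, 0, 0, 0;
     0, 0, 0, 0, -2, 0, 0, 0, 0, 0;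
     0, 0, 0, 0, 0, -2, 0, 0, 0, 0;
     0, 0, 0, 0, 0, 0, -2, 1, 0, 0;
     0, 0, 0, 0, 0, 0, 1, -2, 1, 1;
     0, 0, 0, 0, 0, 0, 0, 1, -2, 0;
     0, 0, 0, 0, 0, 0, 0, 1, 0, -2]

/-- The block diagonal Gram matrix of `U(2) ⊥ A₁ ⊥ A₁ ⊥ D₆`. -/
def gramU2A1A1D6 : Matrix (Fin 10) (Fin 10) ℤ :=
  !![0, 2, 0, 0, 0, 0, 0, 0, 0, 0;
     2, 0, 0, 0, 0, 0, 0, 0, 0, 0;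
     0, 0, -2, 0, 0, 0, 0, 0, 0, 0;
     0, 0, 0, -2, 0, 0, 0, 0, 0, 0;
     0, 0, 0, 0, -2, 1, 0, 0, 0, 0;
     0, 0, 0, 0, 1, -2, 1, 0, 0, 0;
     0, 0, 0, 0, 0, 1, -2, 1, 0, 0;
     0, 0, 0, 0, 0, 0, 1, -2, 1, 1;
     0, 0, 0, 0, 0, 0, 0, 1, -2, 0;
     0, 0, 0, 0, 0, 0, 0, 1, 0, -2]

def Pmat : Matrix (Fin 10) (Fin 10) ℤ :=
  !![-2, -2, 0, 0, -2, 0, 0, 1, 0, 0;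
     -2, -2, 0, 0, -2, 0, 1, -1, 1, 1;
     -1, -1, 0, 0, -1, 0, 0, 0, 0, 1;
     -1, -1, 0, 0, -1, 0, 0, 0, 1, 0;
     0, 0, -1, 0, 0, 0, 0, 0, 0, 0;
     0, 0, 0, -1, 0, 0, 0, 0, 0, 0;
     -2, -1, 0, 0, -2, 0, 1, 0, 0, 0;
     -2, -2, 0, 0, -2, -1, 2, 0, 0, 0;
     -1, -2, 0, 0, -2, 0, 1, 0, 0, 0;
     -1, -1, 0, 0, -1, -1, 1, 0, 0, 0]

def Qmat : Matrix (Fin 10) (Fin 10) ℤ :=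
  !![-1, -1, 1, 1, 0, 0, 0, 0, 1, 0;
     -1, -1, 1, 1, 0, 0, 1, 0, 0, 0;
     0, 0, 0, 0, -1, 0, 0, 0, 0, 0;
     0, 0, 0, 0, 0, -1, 0, 0, 0, 0;
     1, 1, -1, -1, 0, 0, -1, 1, -1, -1;
     0, 0, 0, 0, 0, 0, 0, 1, 0, -2;
     -1, -1, 1, 1, 0, 0, 0, 2, 0, -2;
     -1, -2, 2, 2, 0, 0, 0, 2, 0, -2;
     -1, -1, 1, 2, 0, 0, 0, 1, 0, -1;
     -1, -1, 2, 1, 0, 0, 0, 1, 0, -1]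

def APmat : Matrix (Fin 10) (Fin 10) ℤ :=
  !![-2, -2, 0, 0, -2, 0, 1, -1, 1, 1;
     -2, -2, 0, 0, -2, 0, 0, 1, 0, 0;
     2, 2, 0, 0, 2, 0, 0, 0, 0, -2;
     2, 2, 0, 0, 2, 0, 0, 0, -2, 0;
     0, 0, 2, 0, 0, 0, 0, 0, 0, 0;
     0, 0, 0, 2, 0, 0, 0, 0, 0, 0;
     2, 0, 0, 0, 2, -1, 0, 0, 0, 0;
     0, 0, 0, 0, -1, 1, -1, 0, 0, 0;
     0, 2, 0, 0, 2, -1, 0, 0, 0, 0;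
     0, 0, 0, 0, 0, 1, 0, 0, 0, 0]

def PTmat : Matrix (Fin 10) (Fin 10) ℤ :=
  !![-2, -2, -1, -1, 0, 0, -2, -2, -1, -1;
     -2, -2, -1, -1, 0, 0, -1, -2, -2, -1;
     0, 0, 0, 0, -1, 0, 0, 0, 0, 0;
     0, 0, 0, 0, 0, -1, 0, 0, 0, 0;
     -2, -2, -1, -1, 0, 0, -2, -2, -2, -1;
     0, 0, 0, 0, 0, 0, 0, -1, 0, -1;
     0, 1, 0, 0, 0, 0, 1, 2, 1, 1;
     1, -1, 0, 0, 0, 0, 0, 0, 0, 0;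
     0, 1, 0, 1, 0, 0, 0, 0, 0, 0;
     0, 1, 1, 0, 0, 0, 0, 0, 0, 0]

lemma Pmat_mul_Qmat : Pmat * Qmat = 1 := by
  ext i j
  fin_cases i <;> fin_cases j <;> decide

lemma gram_mul_Pmat : gramUA1A1A1A1D4 * Pmat = APmat := by
  ext i j
  fin_cases i <;> fin_cases j <;> decide

lemma Pmat_transpose : Pmatᵀ = PTmat := by
  ext i j
  fin_cases i <;> fin_cases j <;> decide

lemma PTmat_mul_APmat : PTmat * APmat = gramU2A1A1D6 := by
  ext i j
  fin_cases i <;> fin_cases j <;> decide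

/-- Section 3.7 of the paper: the lattices `U ⊥ A₁⁴ ⊥ D₄` and `U(2) ⊥ A₁² ⊥ D₆`
are isometric. -/
theorem UA14D4_isometric_U2A12D6 :
    ∃ P : Matrix (Fin 10) (Fin 10) ℤ, (P.det = 1 ∨ P.det = -1) ∧
      Pᵀ * gramUA1A1A1A1D4 * P = gramU2A1A1D6 := by
  refine ⟨Pmat, ?_, ?_⟩
  · have hinv : Invertible Pmat := invertibleOfRightInverse _ _ Pmat_mul_Qmat
    exact Int.isUnit_iff.mp (Matrix.isUnit_det_of_invertible Pmat)
  · rw [Matrix.mul_assoc, gram_mul_Pmat, Pmat_transpose, PTmat_mul_APmat]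
end

section
/- The 10×10 block diagonal Gram matrices of U ⊥ A_1² ⊥ D_6 and of U(2) ⊥ A_1 ⊥ E_7 are isometric: there exists a 10×10 integer matrix P with det P = ±1 such that Pᵀ A P = B, where A is the Gram matrix of U ⊥ A_1 ⊥ A_1 ⊥ D_6 and B is the Gram matrix of U(2) ⊥ A_1 ⊥ E_7. -/
open Matrix

/-- The block diagonal Gram matrix of `U ⊥ A₁ ⊥ A₁ ⊥ D₆` (root lattices negative
definite; `D₆` is the negative of the Cartan matrix of type `D₆`). -/
def gramUA1A1D6 : Matrix (Fin 10) (Fin 10) ℤ :=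
  !![0, 1, 0, 0, 0, 0, 0, 0, 0, 0;
     1, 0, 0, 0, 0, 0, 0, 0, 0, 0;
     0, 0, -2, 0, 0, 0, 0, 0, 0, 0;
     0, 0, 0, -2, 0, 0, 0, 0, 0, 0;
     0, 0, 0, 0, -2, 1, 0, 0, 0, 0;
     0, 0, 0, 0, 1, -2, 1, 0, 0, 0;
     0, 0, 0, 0, 0, 1, -2, 1, 0, 0;
     0, 0, 0, 0, 0, 0, 1, -2, 1, 1;
     0, 0, 0, 0, 0, 0, 0, 1, -2, 0;
     0, 0, 0, 0, 0, 0, 0, 1, 0, -2]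

/-- The block diagonal Gram matrix of `U(2) ⊥ A₁ ⊥ E₇` (`E₇` is the negative of the
Cartan matrix of type `E₇`). -/
def gramU2A1E7 : Matrix (Fin 10) (Fin 10) ℤ :=
  !![0, 2, 0, 0, 0, 0, 0, 0, 0, 0;
     2, 0, 0, 0, 0, 0, 0, 0, 0, 0;
     0, 0, -2, 0, 0, 0, 0, 0, 0, 0;
     0, 0, 0, -2, 1, 0, 0, 0, 0, 0;
     0, 0, 0, 1, -2, 1, 0, 0, 0, 0;
     0, 0, 0, 0, 1, -2, 1, 0, 0, 0;
     0, 0, 0, 0, 0, 1, -2, 1, 0, 1;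
     0, 0, 0, 0, 0, 0, 1, -2, 1, 0;
     0, 0, 0, 0, 0, 0, 0, 1, -2, 0;
     0, 0, 0, 0, 0, 0, 1, 0, 0, -2]


/-- The change-of-basis matrix realizing the isometry. -/
def isomP : Matrix (Fin 10) (Fin 10) ℤ :=
  !![-2, -2, 0, -2, 0, 0, 0, 0, 1, 0;
     -2, -2, 0, -2, 0, 0, 0, 1, -1, 0;
     -1, -1, 0, -1, 0, 0, 0, 0, 0, 0;
     0, 0, -1, 0, 0, 0, 0, 0, 0, 0;
     -1, -1, 0, -1, -1, 1, 0, 0, 0, 0;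
     -2, -2, 0, -2, -1, 0, 1, 0, 0, 0;
     -1, -1, 0, -1, -1, 0, 1, -1, 0, 1;
     -2, -2, 0, -2, -1, 0, 0, 0, 0, 2;
     -2, -1, 0, -2, 0, 0, 0, 0, 0, 1;
     -1, -2, 0, -2, 0, 0, 0, 0, 0, 1]

/-- The inverse of `isomP`. -/
def isomQ : Matrix (Fin 10) (Fin 10) ℤ :=
  !![-1, -1, 1, 0, 0, 1, -1, 0, 0, 1;
     -1, -1, 1, 0, 0, 1, -1, 0, 1, 0;
     0, 0, 0, -1, 0, 0, 0, 0, 0, 0;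
     2, 2, -3, 0, 0, -2, 2, 0, -1, -1;
     2, 2, -4, 0, 0, -2, 2, -1, 0, 0;
     2, 2, -5, 0, 1, -2, 2, -1, 0, 0;
     2, 2, -6, 0, 0, -1, 2, -1, 0, 0;
     1, 1, -4, 0, 0, 0, 0, 0, 0, 0;
     1, 0, -2, 0, 0, 0, 0, 0, 0, 0;
     1, 1, -3, 0, 0, -1, 1, 0, 0, 0]

set_option maxRecDepth 10000 in
lemma isomP_mul_isomQ : isomP * isomQ = 1 := by
  rw [← Matrix.mulᵣ_eq]
  decide

set_option maxRecDepth 10000 in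
lemma isomQ_mul_isomP : isomQ * isomP = 1 := by
  rw [← Matrix.mulᵣ_eq]
  decide

lemma isomP_det_unit : isomP.det = 1 ∨ isomP.det = -1 := by
  have inv : Invertible isomP := ⟨isomQ, isomQ_mul_isomP, isomP_mul_isomQ⟩
  exact Int.isUnit_iff.mp (Matrix.isUnit_det_of_invertible isomP)

set_option maxRecDepth 10000 in
/-- Section 3.7 of the paper: the lattices `U ⊥ A₁² ⊥ D₆` and `U(2) ⊥ A₁ ⊥ E₇`
are isometric. -/
theorem UA12D6_isometric_U2A1E7 :
    ∃ P : Matrix (Fin 10) (Fin 10) ℤ, (P.det = 1 ∨ P.det = -1) ∧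
      Pᵀ * gramUA1A1D6 * P = gramU2A1E7 := by
  refine ⟨isomP, isomP_det_unit, ?_⟩
  rw [← Matrix.mulᵣ_eq, ← Matrix.mulᵣ_eq, ← Matrix.transposeᵣ_eq]
  decide
end
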